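/- Let f be a holomorphic self-map of the unit disk D without fixed points. Then the hyperbolic step s^f vanishes at some point of D if and only if s^f vanishes identically on D. -/

import Mathlib

/-!
Write `ρ` for the pseudo-hyperbolic distance, so that `ω = artanh ρ` and `s^f(z) = 0` exactly when
`ρ(fⁿ z, fⁿ⁺¹ z) → 0`. Suppose this happens at `z`, and let `w ∈ D`. By Schwarz–Pick,
`bₙ = ρ(fⁿ z, fⁿ w)` decreases to some `t`. The three-point Schwarz–Pick inequality of Beardon
and Minda, applied to `fⁿ` at `fᵐ z, fᵐ⁺¹ z, fᵐ w`, bounds `b_{n+m} / b_m` by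
`q + ρ(fᵐ⁺¹ z, fᵐ w)(1 + q)`, where `q` is the ratio of the steps of the orbit of `z` at times
`n + m` and `m`. Letting `n → ∞` gives `t ≤ ρ(fᵐ⁺¹ z, fᵐ w) b_m ≤ (ρ(fᵐ z, fᵐ⁺¹ z) + b_m) b_m`,
and letting `m → ∞`, `t ≤ t²`. So `t = 0`: the orbits of `z` and `w` are asymptotic, and by the
triangle inequality the steps of `w` tend to `0` too.
-/

open Complex Metric Filter Set

/-- Inverse hyperbolic tangent. -/
noncomputable def artanh (t : ℝ) : ℝ := (1/2) * Real.log ((1 + t) / (1 - t))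

/-- Poincaré distance on the unit disk. -/
noncomputable def pd (z w : ℂ) : ℝ :=
  artanh ‖(w - z) / (1 - (starRingEnd ℂ) z * w)‖

/-- Holomorphic self-map of the unit disk. -/
def HolSelfDisk (f : ℂ → ℂ) : Prop :=
  DifferentiableOn ℂ f (ball (0:ℂ) 1) ∧ MapsTo f (ball (0:ℂ) 1) (ball (0:ℂ) 1)

/-- A pair of maps that are mutually inverse holomorphic self-maps of the disk,
i.e. an automorphism of the disk together with its inverse. -/
def IsDiskAutPair (γ γinv : ℂ → ℂ) : Prop :=
  HolSelfDisk γ ∧ HolSelfDisk γinv ∧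
  (∀ z ∈ ball (0:ℂ) 1, γinv (γ z) = z) ∧ (∀ z ∈ ball (0:ℂ) 1, γ (γinv z) = z)

open ComplexConjugate
open scoped Topology

local notation "𝔻" => ball (0 : ℂ) 1

noncomputable def mobius (a z : ℂ) : ℂ := (z - a) / (1 - conj a * z)

noncomputable def pseudoDist (a b : ℂ) : ℝ := ‖mobius a b‖

lemma normSq_one_sub_conj_mul_sub_normSq_sub (a b : ℂ) :
    normSq (1 - conj a * b) - normSq (b - a) = (1 - normSq a) * (1 - normSq b) := by
  simp only [normSq_apply, sub_re, sub_im, mul_re, mul_im, one_re, one_im, conj_re, conj_im]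
  ring

lemma normSq_lt_one_of_mem_ball {a : ℂ} (ha : a ∈ 𝔻) : normSq a < 1 := by
  rw [← Complex.sq_norm]
  exact pow_lt_one₀ (norm_nonneg a) (mem_ball_zero_iff.1 ha) two_ne_zero

lemma norm_sub_lt_norm_one_sub_conj_mul {a b : ℂ} (ha : a ∈ 𝔻) (hb : b ∈ 𝔻) :
    ‖b - a‖ < ‖1 - conj a * b‖ := by
  have key := normSq_one_sub_conj_mul_sub_normSq_sub a b
  have hpos := mul_pos (sub_pos.2 (normSq_lt_one_of_mem_ball ha))
    (sub_pos.2 (normSq_lt_one_of_mem_ball hb))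
  rw [← pow_lt_pow_iff_left₀ (norm_nonneg _) (norm_nonneg _) two_ne_zero, Complex.sq_norm,
    Complex.sq_norm]
  linarith

lemma one_sub_conj_mul_ne_zero {a b : ℂ} (ha : a ∈ 𝔻) (hb : b ∈ 𝔻) : 1 - conj a * b ≠ 0 :=
  norm_pos_iff.1 ((norm_nonneg _).trans_lt (norm_sub_lt_norm_one_sub_conj_mul ha hb))

lemma pseudoDist_lt_one {a b : ℂ} (ha : a ∈ 𝔻) (hb : b ∈ 𝔻) : pseudoDist a b < 1 := by
  rw [pseudoDist, mobius, norm_div, div_lt_one (norm_pos_iff.2 (one_sub_conj_mul_ne_zero ha hb))]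
  exact norm_sub_lt_norm_one_sub_conj_mul ha hb

lemma mobius_mem_ball {a z : ℂ} (ha : a ∈ 𝔻) (hz : z ∈ 𝔻) : mobius a z ∈ 𝔻 :=
  mem_ball_zero_iff.2 (pseudoDist_lt_one ha hz)

lemma pseudoDist_nonneg (a b : ℂ) : 0 ≤ pseudoDist a b := norm_nonneg _

lemma pseudoDist_comm (a b : ℂ) : pseudoDist a b = pseudoDist b a := by
  have hden : ‖1 - conj a * b‖ = ‖1 - conj b * a‖ := by
    rw [← norm_conj]
    simp only [map_sub, map_one, map_mul, conj_conj, mul_comm]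
  rw [pseudoDist, pseudoDist, mobius, mobius, norm_div, norm_div, norm_sub_rev, hden]

lemma pseudoDist_pos {a b : ℂ} (ha : a ∈ 𝔻) (hb : b ∈ 𝔻) (hab : a ≠ b) : 0 < pseudoDist a b := by
  rw [pseudoDist, norm_pos_iff, mobius]
  exact div_ne_zero (sub_ne_zero.2 hab.symm) (one_sub_conj_mul_ne_zero ha hb)

lemma mobius_neg_zero (a : ℂ) : mobius (-a) 0 = a := by simp [mobius]

lemma mobius_self (a : ℂ) : mobius a a = 0 := by simp [mobius]

lemma mobius_neg_mobius {a z : ℂ} (ha : a ∈ 𝔻) (hz : z ∈ 𝔻) : mobius (-a) (mobius a z) = z := by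
  have hw : mobius a z * (1 - conj a * z) = z - a :=
    div_mul_cancel₀ _ (one_sub_conj_mul_ne_zero ha hz)
  have hd := one_sub_conj_mul_ne_zero (a := -a) (by simpa using ha) (mobius_mem_ball ha hz)
  rw [mobius, div_eq_iff hd, map_neg]
  linear_combination hw

lemma differentiableOn_mobius {a : ℂ} (ha : a ∈ 𝔻) : DifferentiableOn ℂ (mobius a) 𝔻 :=
  (differentiableOn_id.sub_const a).div ((differentiableOn_const _).sub
    ((differentiableOn_const _).mul differentiableOn_id)) fun _ hz => one_sub_conj_mul_ne_zero ha hz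

lemma norm_one_sub_mul_conj (a b : ℂ) : ‖1 - b * conj a‖ = ‖1 - conj b * a‖ := by
  rw [← norm_conj]
  simp only [map_sub, map_one, map_mul, conj_conj]

lemma mobius_mobius_mobius {a b c : ℂ} (ha : a ∈ 𝔻) (hb : b ∈ 𝔻) (hc : c ∈ 𝔻) :
    mobius (mobius b a) (mobius b c)
      = (c - a) * (1 - b * conj a) / ((1 - conj b * a) * (1 - conj a * c)) := by
  have hba := one_sub_conj_mul_ne_zero hb ha
  have hbc := one_sub_conj_mul_ne_zero hb hc
  have hac := one_sub_conj_mul_ne_zero ha hc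
  have hden := one_sub_conj_mul_ne_zero (mobius_mem_ball hb ha) (mobius_mem_ball hb hc)
  have hba' : 1 - b * conj a ≠ 0 := by
    rw [← map_ne_zero (starRingEnd ℂ)]
    simpa [mul_comm] using hba
  rw [mobius, div_eq_div_iff hden (mul_ne_zero hba hac)]
  simp only [mobius, map_div₀, map_sub, map_mul, map_one, conj_conj]
  have hcb : 1 - c * conj b ≠ 0 := by rwa [mul_comm]
  field_simp
  ring

lemma pseudoDist_mobius_mobius {a b c : ℂ} (ha : a ∈ 𝔻) (hb : b ∈ 𝔻) (hc : c ∈ 𝔻) :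
    pseudoDist (mobius b a) (mobius b c) = pseudoDist a c := by
  have hba := norm_pos_iff.2 (one_sub_conj_mul_ne_zero hb ha)
  rw [pseudoDist, mobius_mobius_mobius ha hb hc, norm_div, norm_mul, norm_mul,
    norm_one_sub_mul_conj, mul_comm ‖1 - conj b * a‖, mul_div_mul_right _ _ hba.ne',
    pseudoDist, mobius, norm_div]

lemma pseudoDist_le_norm_add_norm {x y : ℂ} (hx : x ∈ 𝔻) (hy : y ∈ 𝔻) :
    pseudoDist x y ≤ ‖x‖ + ‖y‖ := by
  have hD := norm_pos_iff.2 (one_sub_conj_mul_ne_zero hx hy)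
  have hD_le : ‖1 - conj x * y‖ ≤ 1 + ‖x‖ * ‖y‖ := by
    simpa using norm_sub_le (1 : ℂ) (conj x * y)
  have key := normSq_one_sub_conj_mul_sub_normSq_sub x y
  simp only [← Complex.sq_norm] at key
  have hr := mem_ball_zero_iff.1 hx
  have hs := mem_ball_zero_iff.1 hy
  rw [pseudoDist, mobius, norm_div, div_le_iff₀ hD]
  refine le_of_sq_le_sq ?_ (by positivity)
  set r := ‖x‖
  set s := ‖y‖
  set D := ‖1 - conj x * y‖
  have hr0 : 0 ≤ r := norm_nonneg x
  have hs0 : 0 ≤ s := norm_nonneg y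
  have hprod : 0 < (1 - r ^ 2) * (1 - s ^ 2) := by
    apply mul_pos <;> nlinarith
  have hD_sq : D ^ 2 ≤ (1 + r * s) ^ 2 := pow_le_pow_left₀ hD.le hD_le 2
  rcases le_or_gt 1 (r + s) with h | h
  · nlinarith [mul_le_mul_of_nonneg_right (one_le_pow₀ (n := 2) h) (sq_nonneg D)]
  · have hrs : 0 ≤ 1 - (r + s) ^ 2 := by nlinarith
    nlinarith [mul_le_mul_of_nonneg_right hD_sq hrs, mul_nonneg hr0 hs0,
      mul_le_mul_of_nonneg_right (one_le_pow₀ (n := 2) (by nlinarith : (1:ℝ) ≤ 1 + r * s))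
        (sq_nonneg (r + s))]

lemma pseudoDist_triangle {a b c : ℂ} (ha : a ∈ 𝔻) (hb : b ∈ 𝔻) (hc : c ∈ 𝔻) :
    pseudoDist a c ≤ pseudoDist a b + pseudoDist b c := by
  rw [← pseudoDist_mobius_mobius ha hb hc, pseudoDist_comm a b]
  exact pseudoDist_le_norm_add_norm (mobius_mem_ball hb ha) (mobius_mem_ball hb hc)

lemma HolSelfDisk.iterate {f : ℂ → ℂ} (hf : HolSelfDisk f) (n : ℕ) : HolSelfDisk f^[n] :=
  ⟨hf.1.iterate hf.2 n, hf.2.iterate n⟩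

noncomputable def recenter (F : ℂ → ℂ) (p u : ℂ) : ℂ := mobius (F p) (F (mobius (-p) u))

namespace HolSelfDisk

variable {F : ℂ → ℂ} {p q : ℂ}

lemma recenter_zero : recenter F p 0 = 0 := by
  rw [recenter, mobius_neg_zero, mobius_self]

lemma recenter_mobius (hp : p ∈ 𝔻) (hq : q ∈ 𝔻) :
    recenter F p (mobius p q) = mobius (F p) (F q) := by
  rw [recenter, mobius_neg_mobius hp hq]

lemma holSelfDisk_recenter (hF : HolSelfDisk F) (hp : p ∈ 𝔻) : HolSelfDisk (recenter F p) := by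
  have hp' : -p ∈ 𝔻 := by simpa using hp
  have hm : MapsTo (mobius (-p)) 𝔻 𝔻 := fun u hu => mobius_mem_ball hp' hu
  refine ⟨(differentiableOn_mobius (hF.2 hp)).comp (hF.1.comp (differentiableOn_mobius hp') hm)
    (hF.2.comp hm), fun u hu => mobius_mem_ball (hF.2 hp) (hF.2 (hm hu))⟩

/-- The Schwarz–Pick lemma. -/
theorem pseudoDist_le (hF : HolSelfDisk F) (hp : p ∈ 𝔻) (hq : q ∈ 𝔻) :
    pseudoDist (F p) (F q) ≤ pseudoDist p q := by
  have hG := hF.holSelfDisk_recenter hp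
  rw [pseudoDist, pseudoDist, ← recenter_mobius hp hq]
  exact Complex.norm_le_norm_of_mapsTo_ball hG.1 (hG.2.mono_right ball_subset_closedBall)
    recenter_zero (mem_ball_zero_iff.1 (mobius_mem_ball hp hq))

end HolSelfDisk

lemma norm_sub_norm_le_pseudoDist_mul {x y : ℂ} (hx : x ∈ 𝔻) (hy : y ∈ 𝔻) :
    ‖y‖ - ‖x‖ ≤ pseudoDist x y * (1 + ‖x‖) := by
  have hy1 := (mem_ball_zero_iff.1 hy).le
  have hden : ‖1 - conj x * y‖ ≤ 1 + ‖x‖ := by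
    calc ‖1 - conj x * y‖ ≤ 1 + ‖x‖ * ‖y‖ := by simpa using norm_sub_le (1 : ℂ) (conj x * y)
      _ ≤ 1 + ‖x‖ := by gcongr; exact mul_le_of_le_one_right (norm_nonneg x) hy1
  calc ‖y‖ - ‖x‖ ≤ ‖y - x‖ := norm_sub_norm_le y x
    _ = pseudoDist x y * ‖1 - conj x * y‖ := by
      rw [pseudoDist, mobius, norm_div, div_mul_cancel₀]
      exact norm_ne_zero_iff.2 (one_sub_conj_mul_ne_zero hx hy)
    _ ≤ pseudoDist x y * (1 + ‖x‖) := by gcongr; exact pseudoDist_nonneg x y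

lemma norm_le_norm_add_pseudoDist_mul {Φ : ℂ → ℂ} (hd : DifferentiableOn ℂ Φ 𝔻)
    (hΦ : MapsTo Φ 𝔻 (closedBall 0 1)) {u v : ℂ} (hu : u ∈ 𝔻) (hv : v ∈ 𝔻) :
    ‖Φ v‖ ≤ ‖Φ u‖ + pseudoDist u v * (1 + ‖Φ u‖) := by
  by_cases hΦ' : MapsTo Φ 𝔻 𝔻
  · have := norm_sub_norm_le_pseudoDist_mul (hΦ' hu) (hΦ' hv)
    have := HolSelfDisk.pseudoDist_le ⟨hd, hΦ'⟩ hu hv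
    nlinarith [norm_nonneg (Φ u)]
  · obtain ⟨w, hw, hΦw⟩ := not_forall₂.1 hΦ'
    have hmax : IsMaxOn (norm ∘ Φ) 𝔻 w := fun x hx => by
      simpa using (mem_closedBall_zero_iff.1 (hΦ hx)).trans (not_lt.1 (hΦw ∘ mem_ball_zero_iff.2))
    have hconst := Complex.eqOn_of_isPreconnected_of_isMaxOn_norm
      (convex_ball (0 : ℂ) 1).isPreconnected isOpen_ball hd hw hmax
    rw [hconst hv, hconst hu]
    simp only [Function.const_apply]
    have := mul_nonneg (pseudoDist_nonneg u v) (by positivity : 0 ≤ 1 + ‖Φ w‖)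
    linarith

/-- The three-point Schwarz–Pick lemma of Beardon and Minda. -/
theorem HolSelfDisk.pseudoDist_div_le {F : ℂ → ℂ} (hF : HolSelfDisk F) {p q v : ℂ} (hp : p ∈ 𝔻)
    (hq : q ∈ 𝔻) (hv : v ∈ 𝔻) (hpq : p ≠ q) (hpv : p ≠ v) :
    pseudoDist (F p) (F v) / pseudoDist p v ≤ pseudoDist (F p) (F q) / pseudoDist p q
      + pseudoDist q v * (1 + pseudoDist (F p) (F q) / pseudoDist p q) := by
  have hG := hF.holSelfDisk_recenter hp
  have hΦ : ∀ x ∈ 𝔻, p ≠ x →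
      ‖dslope (recenter F p) 0 (mobius p x)‖ = pseudoDist (F p) (F x) / pseudoDist p x := by
    intro x hx hpx
    have hne : mobius p x ≠ 0 := norm_pos_iff.1 (pseudoDist_pos hp hx hpx)
    rw [dslope_of_ne _ hne, slope_def_field, recenter_zero, sub_zero, sub_zero, norm_div,
      recenter_mobius hp hx, pseudoDist, pseudoDist]
  have hΦm : MapsTo (dslope (recenter F p) 0) 𝔻 (closedBall 0 1) := fun u hu => by
    simpa using Complex.norm_dslope_le_div_of_mapsTo_ball hG.1
      (by simpa [recenter_zero] using hG.2.mono_right ball_subset_closedBall) hu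
  have hΦd : DifferentiableOn ℂ (dslope (recenter F p) 0) 𝔻 :=
    (differentiableOn_dslope (ball_mem_nhds 0 one_pos)).2 hG.1
  have := norm_le_norm_add_pseudoDist_mul hΦd hΦm (mobius_mem_ball hp hq) (mobius_mem_ball hp hv)
  rwa [hΦ q hq hpq, hΦ v hv hpv, pseudoDist_mobius_mobius hq hp hv] at this

lemma Real.continuous_tanh : Continuous Real.tanh := by
  simp only [funext Real.tanh_eq_sinh_div_cosh]
  exact Real.continuous_sinh.div Real.continuous_cosh fun x => (Real.cosh_pos x).ne'

lemma tanh_pd {z w : ℂ} (hz : z ∈ 𝔻) (hw : w ∈ 𝔻) : Real.tanh (pd z w) = pseudoDist z w := by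
  have h1 := pseudoDist_lt_one hz hw
  have h0 := pseudoDist_nonneg z w
  change Real.tanh (artanh (pseudoDist z w)) = _
  rw [artanh, ← Real.artanh_eq_half_log ⟨by linarith, h1.le⟩,
    Real.tanh_artanh ⟨by linarith, h1⟩]

lemma tendsto_pseudoDist_succ_of_tendsto {x y : ℕ → ℂ} (hx : ∀ n, x n ∈ 𝔻) (hy : ∀ n, y n ∈ 𝔻)
    (hxy : Tendsto (fun n => pseudoDist (x n) (y n)) atTop (𝓝 0))
    (hx_step : Tendsto (fun n => pseudoDist (x n) (x (n + 1))) atTop (𝓝 0)) :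
    Tendsto (fun n => pseudoDist (y n) (y (n + 1))) atTop (𝓝 0) := by
  have hbound : ∀ n, pseudoDist (y n) (y (n + 1)) ≤ pseudoDist (x n) (y n) +
      (pseudoDist (x n) (x (n + 1)) + pseudoDist (x (n + 1)) (y (n + 1))) :=
    fun n => calc
      pseudoDist (y n) (y (n + 1)) ≤ pseudoDist (y n) (x n) + pseudoDist (x n) (y (n + 1)) :=
        pseudoDist_triangle (hy n) (hx n) (hy (n + 1))
      _ ≤ _ := by
        rw [pseudoDist_comm (y n)]
        gcongr
        exact pseudoDist_triangle (hx n) (hx (n + 1)) (hy (n + 1))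
  refine squeeze_zero (fun n => pseudoDist_nonneg _ _) hbound ?_
  simpa using hxy.add (hx_step.add (hxy.comp (tendsto_add_atTop_nat 1)))

section Orbits

variable {f : ℂ → ℂ} {z w : ℂ}

lemma antitone_pseudoDist_iterate (hf : HolSelfDisk f) (hz : z ∈ 𝔻) (hw : w ∈ 𝔻) :
    Antitone fun n => pseudoDist (f^[n] z) (f^[n] w) :=
  antitone_nat_of_succ_le fun n => by
    simpa only [Function.iterate_succ_apply'] using
      hf.pseudoDist_le (hf.2.iterate n hz) (hf.2.iterate n hw)

lemma le_pseudoDist_mul_pseudoDist_of_tendsto (hf : HolSelfDisk f) (hz : z ∈ 𝔻) (hw : w ∈ 𝔻)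
    {t : ℝ} (hstep : Tendsto (fun n => pseudoDist (f^[n] z) (f^[n + 1] z)) atTop (𝓝 0))
    (ht : Tendsto (fun n => pseudoDist (f^[n] z) (f^[n] w)) atTop (𝓝 t))
    {m : ℕ} (hmove : f^[m] z ≠ f^[m + 1] z) (hzw : f^[m] z ≠ f^[m] w) :
    t ≤ pseudoDist (f^[m + 1] z) (f^[m] w) * pseudoDist (f^[m] z) (f^[m] w) := by
  set b := fun n => pseudoDist (f^[n] z) (f^[n] w)
  set ε := fun n => pseudoDist (f^[n] z) (f^[n + 1] z)
  set c := pseudoDist (f^[m + 1] z) (f^[m] w)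
  have hmem : ∀ {x} (n : ℕ), x ∈ 𝔻 → f^[n] x ∈ 𝔻 := fun n hx => hf.2.iterate n hx
  have hquot : ∀ n, b (n + m) / b m ≤ ε (n + m) / ε m + c * (1 + ε (n + m) / ε m) := fun n => by
    have := (hf.iterate n).pseudoDist_div_le (hmem m hz) (hmem (m + 1) hz) (hmem m hw) hmove hzw
    simpa only [← Function.iterate_add_apply, ← add_assoc] using this
  have hε : Tendsto (fun n => ε (n + m) / ε m) atTop (𝓝 0) := by
    simpa using (hstep.comp (tendsto_add_atTop_nat m)).div_const (ε m)
  have hlim := le_of_tendsto_of_tendsto' ((ht.comp (tendsto_add_atTop_nat m)).div_const (b m))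
    (hε.add (tendsto_const_nhds.mul (tendsto_const_nhds.add hε))) hquot
  rw [zero_add, add_zero, mul_one,
    div_le_iff₀ (pseudoDist_pos (hmem m hz) (hmem m hw) hzw)] at hlim
  exact hlim

theorem tendsto_pseudoDist_iterate_of_tendsto_step (hf : HolSelfDisk f)
    (hfix : ∀ z ∈ 𝔻, f z ≠ z) (hz : z ∈ 𝔻) (hw : w ∈ 𝔻)
    (hstep : Tendsto (fun n => pseudoDist (f^[n] z) (f^[n + 1] z)) atTop (𝓝 0)) :
    Tendsto (fun n => pseudoDist (f^[n] z) (f^[n] w)) atTop (𝓝 0) := by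
  set b := fun n => pseudoDist (f^[n] z) (f^[n] w)
  have hbdd : BddBelow (range b) := ⟨0, by rintro _ ⟨n, rfl⟩; exact pseudoDist_nonneg _ _⟩
  have ht := tendsto_atTop_ciInf (antitone_pseudoDist_iterate hf hz hw) hbdd
  set t := ⨅ n, b n
  suffices t = 0 by rwa [this] at ht
  have ht0 : 0 ≤ t := le_ciInf fun n => pseudoDist_nonneg _ _
  have ht1 : t < 1 := (ciInf_le hbdd 0).trans_lt (pseudoDist_lt_one hz hw)
  by_contra hne
  have htpos : 0 < t := lt_of_le_of_ne ht0 (Ne.symm hne)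
  have hbound : ∀ m, t ≤ (pseudoDist (f^[m] z) (f^[m + 1] z) + b m) * b m := fun m => by
    have hzw : f^[m] z ≠ f^[m] w := fun h => by
      have := htpos.trans_le (ciInf_le hbdd m)
      simp [b, h, pseudoDist, mobius_self] at this
    have hmove : f^[m] z ≠ f^[m + 1] z := by
      rw [Function.iterate_succ_apply']
      exact (hfix _ (hf.2.iterate m hz)).symm
    calc t ≤ pseudoDist (f^[m + 1] z) (f^[m] w) * b m :=
          le_pseudoDist_mul_pseudoDist_of_tendsto hf hz hw hstep ht hmove hzw
      _ ≤ _ := by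
        gcongr
        · exact pseudoDist_nonneg _ _
        · rw [pseudoDist_comm (f^[m] z)]
          exact pseudoDist_triangle (hf.2.iterate _ hz) (hf.2.iterate _ hz) (hf.2.iterate _ hw)
  have := ge_of_tendsto' ((hstep.add ht).mul ht) hbound
  nlinarith

end Orbits

theorem stmt9 (f : ℂ → ℂ) (hf : HolSelfDisk f)
    (hfix : ∀ z ∈ ball (0:ℂ) 1, f z ≠ z)
    (s : ℂ → ℝ)
    (hs : ∀ z ∈ ball (0:ℂ) 1,
      Tendsto (fun n => pd (f^[n] z) (f^[n+1] z)) atTop (nhds (s z))) :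
    (∃ z₀ ∈ ball (0:ℂ) 1, s z₀ = 0) ↔ (∀ z ∈ ball (0:ℂ) 1, s z = 0) := by
  have hstep : ∀ z ∈ 𝔻, Tendsto (fun n => pseudoDist (f^[n] z) (f^[n + 1] z)) atTop
      (𝓝 (Real.tanh (s z))) := fun z hz =>
    ((Real.continuous_tanh.tendsto _).comp (hs z hz)).congr fun n =>
      tanh_pd (hf.2.iterate n hz) (hf.2.iterate (n + 1) hz)
  refine ⟨fun ⟨z₀, hz₀, hs₀⟩ w hw => ?_,
    fun h => ⟨0, mem_ball_self one_pos, h 0 (mem_ball_self one_pos)⟩⟩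
  have h₀ : Tendsto (fun n => pseudoDist (f^[n] z₀) (f^[n + 1] z₀)) atTop (𝓝 0) := by
    simpa [hs₀] using hstep z₀ hz₀
  have hw₀ := tendsto_pseudoDist_succ_of_tendsto (fun n => hf.2.iterate n hz₀)
    (fun n => hf.2.iterate n hw) (tendsto_pseudoDist_iterate_of_tendsto_step hf hfix hz₀ hw h₀) h₀
  exact Real.tanh_injective (by simpa using tendsto_nhds_unique (hstep w hw) hw₀)
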